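/- Let D_{2m} = ⟨r, s | r^m = s² = 1, srs = r⁻¹⟩ be the dihedral group and let φ, ψ : D_{2m} → S_n be homomorphisms that are generator-conjugate with respect to r, s and satisfy φ(r) = ψ(r) = σ, where σ = σ₁⋯σ_l with each σᵢ a product of kᵢ pairwise disjoint cycles of length dᵢ and the dᵢ pairwise distinct. Write φ(s) = μπ₁⋯π_l and ψ(s) = μ'π₁'⋯π_l' with μ, μ' ∈ S_{Fix(σ)} and πᵢ, πᵢ' ∈ H_{σᵢ}. Then φ and ψ are conjugate if and only if: (i) μ and μ' are conjugate in S_n; (ii) for every 1 ≤ i ≤ l, πᵢ and πᵢ' are conjugate in S_n and their images under the induced homomorphism H_{σᵢ} → H_{σᵢ}/K_{H_{σᵢ}} ≅ S_{kᵢ} have the same cycle type. -/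

import Mathlib

open Equiv Equiv.Perm Finset

/-- The "non-trivial centralizer" `Cent₀(σ)`: permutations commuting with `σ`
whose support is contained in the support of `σ`. -/
def Cent0 {n : ℕ} (σ : Equiv.Perm (Fin n)) : Subgroup (Equiv.Perm (Fin n)) where
  carrier := {π | Commute π σ ∧ π.support ⊆ σ.support}
  one_mem' := ⟨Commute.one_left σ, by simp⟩
  mul_mem' := by
    intro a b ha hb
    exact ⟨ha.1.mul_left hb.1, (Equiv.Perm.support_mul_le a b).trans (sup_le ha.2 hb.2)⟩
  inv_mem' := by
    intro a ha
    exact ⟨ha.1.inv_left, by rw [Equiv.Perm.support_inv]; exact ha.2⟩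

/-- The product `∏_{i ∈ s} τᵢ^{zᵢ}` of powers of pairwise disjoint permutations. -/
def Kprod {n k : ℕ} (τ : Fin k → Equiv.Perm (Fin n))
    (hdisj : ∀ i j, i ≠ j → Equiv.Perm.Disjoint (τ i) (τ j))
    (s : Finset (Fin k)) (z : Fin k → ℤ) : Equiv.Perm (Fin n) :=
  s.noncommProd (fun i => τ i ^ z i)
    (fun a _ b _ hab => Commute.zpow_zpow ((hdisj a b hab).commute) _ _)

/-- The subgroup `H_σ = { x ∈ S_{X_σ} : xσx⁻¹ = σ^z for some integer z }`, as a set. -/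
def Hgrp {n : ℕ} (σ : Equiv.Perm (Fin n)) : Set (Equiv.Perm (Fin n)) :=
  {x | x.support ⊆ σ.support ∧ ∃ z : ℤ, x * σ * x⁻¹ = σ ^ z}

/-!
A conjugator of `φ` to `ψ` is a `ρ` with `ρσρ⁻¹ = σ` and `ρ φ(s) ρ⁻¹ = ψ(s)`. Commuting with `σ`,
`ρ` preserves the lengths of the cycles of `σ`; as the `dᵢ` are distinct it preserves every `X_{σᵢ}`
and `Fix(σ)`, so the problem splits into the conjugacy of `μ` and `μ'` and one problem per block.
The dihedral relations make each `πᵢ` an involution inverting `σᵢ`.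

On a block, label the points by `Fin k × ZMod d` so that `σᵢ` becomes `(j, a) ↦ (j, a + 1)`. Its
centraliser then consists of the maps `(j, a) ↦ (h j, a + t j)`, and `πᵢ` takes the form
`(j, a) ↦ (g j, c j - a)`, where `g` is the permutation induced on the cycles. Conjugating by
`(h, t)` replaces `g` by `h g h⁻¹`, so the cycle type of `g` is an invariant. Conversely, two such
involutions with `g, g'` of equal cycle type are conjugate once `h` can be chosen to match the fixed
cycles `j` with `c j` even; their number is read off from the number of fixed points of `πᵢ`.
-/

theorem Set.EqOn.perm_mul {α : Type*} {f f' g g' : Equiv.Perm α} {T : Set α}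
    (hf : Set.EqOn f f' T) (hg : Set.EqOn g g' T) (hg' : Set.MapsTo g' T T) :
    Set.EqOn ⇑(f * g) ⇑(f' * g') T :=
  fun x hx => by simp only [Perm.mul_apply, hg hx, hf (hg' hx)]

theorem Set.EqOn.perm_inv {α : Type*} {f f' : Equiv.Perm α} {T : Set α} (h : Set.EqOn f f' T)
    (hf' : Set.MapsTo ⇑f'⁻¹ T T) : Set.EqOn ⇑f⁻¹ ⇑f'⁻¹ T :=
  fun x hx => by rw [inv_eq_iff_eq, h (hf' hx), ← Perm.mul_apply, mul_inv_cancel, Perm.one_apply]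

theorem Set.EqOn.perm_conj {α : Type*} {ρ ρ' F f : Equiv.Perm α} {T : Set α}
    (hρ : Set.EqOn ρ ρ' T) (hF : Set.EqOn F f T) (hf : Set.MapsTo f T T)
    (hρ' : Set.MapsTo ⇑ρ'⁻¹ T T) :
    Set.EqOn ⇑(ρ * F * ρ⁻¹) ⇑(ρ' * f * ρ'⁻¹) T :=
  (hρ.perm_mul hF hf).perm_mul (hρ.perm_inv hρ') hρ'

namespace Equiv.Perm

variable {α : Type*} [Fintype α] [DecidableEq α]

theorem mapsTo_of_support_subset {f : Perm α} {T : Finset α} (hf : f.support ⊆ T) :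
    Set.MapsTo f T T := fun x hx => by
  by_cases h : f x = x
  · rwa [h]
  · exact hf (apply_mem_support.2 (mem_support.2 h))

theorem mapsTo_inv_of_support_subset {f : Perm α} {T : Finset α} (hf : f.support ⊆ T) :
    Set.MapsTo ⇑f⁻¹ T T :=
  mapsTo_of_support_subset (by rwa [support_inv])

theorem eqOn_one_of_disjoint {f : Perm α} {T : Finset α} (h : _root_.Disjoint f.support T) :
    Set.EqOn f ⇑(1 : Perm α) T := fun _ hx =>
  notMem_support.1 (Finset.disjoint_right.1 h hx)

theorem eq_of_eqOn {f g : Perm α} {T : Finset α} (hf : f.support ⊆ T) (hg : g.support ⊆ T)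
    (h : Set.EqOn f g T) : f = g := by
  ext x
  by_cases hx : x ∈ T
  · exact h hx
  · rw [notMem_support.1 fun h => hx (hf h), notMem_support.1 fun h => hx (hg h)]

theorem apply_mem_iff_of_support_subset {f : Perm α} {T : Finset α} (hf : f.support ⊆ T)
    (x : α) : f x ∈ T ↔ x ∈ T := by
  by_cases h : f x = x
  · rw [h]
  · exact iff_of_true (hf (apply_mem_support.2 (mem_support.2 h))) (hf (mem_support.2 h))

theorem support_conj_subset {ρ f : Perm α} {T : Finset α} (hρ : Set.MapsTo ρ T T)
    (hf : f.support ⊆ T) : (ρ * f * ρ⁻¹).support ⊆ T := by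
  rw [support_conj]
  rintro _ hx
  obtain ⟨y, hy, rfl⟩ := mem_map.1 hx
  exact hρ (hf hy)

theorem conj_eq_of_eqOn {T : Finset α} {ρ ρ' F F' f f' : Perm α} (hρ : Set.EqOn ρ ρ' T)
    (hρ' : ρ'.support ⊆ T) (hF : Set.EqOn F f T) (hf : f.support ⊆ T) (hF' : Set.EqOn F' f' T)
    (hf' : f'.support ⊆ T) (h : ρ * F * ρ⁻¹ = F') : ρ' * f * ρ'⁻¹ = f' := by
  refine eq_of_eqOn (support_conj_subset (mapsTo_of_support_subset hρ') hf) hf' fun x hx => ?_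
  rw [← hρ.perm_conj hF (mapsTo_of_support_subset hf) (mapsTo_inv_of_support_subset hρ') hx, h]
  exact hF' hx

theorem eqOn_conj_of_eqOn {T : Finset α} {ρ ρ' F F' f f' : Perm α} (hρ : Set.EqOn ρ ρ' T)
    (hρ' : ρ'.support ⊆ T) (hF : Set.EqOn F f T) (hf : f.support ⊆ T) (hF' : Set.EqOn F' f' T)
    (h : ρ' * f * ρ'⁻¹ = f') : Set.EqOn ⇑(ρ * F * ρ⁻¹) F' T := fun x hx => by
  rw [hρ.perm_conj hF (mapsTo_of_support_subset hf) (mapsTo_inv_of_support_subset hρ') hx, h,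
    hF' hx]

theorem exists_support_subset_eqOn {ρ : Perm α} {T : Finset α} (h : ∀ x, ρ x ∈ T ↔ x ∈ T) :
    ∃ ρ' : Perm α, ρ'.support ⊆ T ∧ Set.EqOn ρ ρ' T := by
  refine ⟨ofSubtype (ρ.subtypePerm h), fun x hx => ?_, fun x hx =>
    (ofSubtype_subtypePerm_of_mem h hx).symm⟩
  by_contra hxT
  exact mem_support.1 hx (ofSubtype_subtypePerm_of_not_mem h hxT)

theorem exists_conj_support_subset {f g : Perm α} {T : Finset α} (hf : f.support ⊆ T)
    (hg : g.support ⊆ T) (h : IsConj f g) : ∃ c : Perm α, c.support ⊆ T ∧ c * f * c⁻¹ = g := by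
  have hf' := ofSubtype_subtypePerm (apply_mem_iff_of_support_subset hf) fun x hx =>
    hf (mem_support.2 hx)
  have hg' := ofSubtype_subtypePerm (apply_mem_iff_of_support_subset hg) fun x hx =>
    hg (mem_support.2 hx)
  rw [← hf', ← hg', isConj_iff_cycleType_eq, cycleType_ofSubtype, cycleType_ofSubtype,
    ← isConj_iff_cycleType_eq, isConj_iff] at h
  obtain ⟨c, hc⟩ := h
  refine ⟨ofSubtype c, fun x hx => ?_, by rw [← hf', ← hg', ← hc, map_mul, map_mul, map_inv]⟩
  by_contra hxT
  exact mem_support.1 hx (ofSubtype_apply_of_not_mem c hxT)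

theorem _root_.Commute.apply_mem_support_iff {ρ σ : Perm α} (h : Commute ρ σ) (x : α) :
    ρ x ∈ σ.support ↔ x ∈ σ.support := by
  rw [mem_support, mem_support, ← mul_apply, ← h.eq, mul_apply, Ne, Ne, ρ.apply_eq_iff_eq]

theorem card_support_cycleOf_apply_of_commute {ρ σ : Perm α} (h : Commute ρ σ) (x : α) :
    #(σ.cycleOf (ρ x)).support = #(σ.cycleOf x).support := by
  by_cases hx : x ∈ σ.support
  · have hmem : ρ * σ.cycleOf x * ρ⁻¹ ∈ σ.cycleFactorsFinset := by
      have := (mem_cycleFactorsFinset_conj σ ρ _).2 (cycleOf_mem_cycleFactorsFinset_iff.2 hx)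
      rwa [h.mul_inv_cancel] at this
    have hρx : ρ x ∈ (ρ * σ.cycleOf x * ρ⁻¹).support := by
      simpa [support_conj] using mem_support_cycleOf_iff.2 ⟨SameCycle.refl _ _, hx⟩
    rw [← cycle_is_cycleOf hρx hmem, card_support_conj]
  · have hρx : ρ x ∉ σ.support := (h.apply_mem_support_iff x).not.2 hx
    rw [notMem_support, ← cycleOf_eq_one_iff] at hx hρx
    rw [hx, hρx]

end Equiv.Perm

namespace DihedralGroup

variable {m : ℕ} {G : Type*} [Group G]

theorem hom_ext_r_one_sr_zero {f g : DihedralGroup m →* G} (hr : f (r 1) = g (r 1))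
    (hs : f (sr 0) = g (sr 0)) : f = g := by
  have hr' (i : ZMod m) : f (r i) = g (r i) := by
    rw [← ZMod.intCast_zmod_cast i, ← r_one_zpow, map_zpow, map_zpow, hr]
  ext (i | i)
  · exact hr' i
  · rw [← zero_add i, ← sr_mul_r, map_mul, map_mul, hs, hr']

theorem map_sr_zero_mul_self (f : DihedralGroup m →* G) : f (sr 0) * f (sr 0) = 1 := by
  rw [← map_mul, sr_mul_self, map_one]

theorem map_sr_zero_conj_r_one (f : DihedralGroup m →* G) :
    f (sr 0) * f (r 1) * (f (sr 0))⁻¹ = (f (r 1))⁻¹ := by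
  rw [← map_inv, ← map_inv, ← map_mul, ← map_mul, inv_sr, sr_mul_r, sr_mul_sr, inv_r, zero_sub,
    zero_add]

theorem exists_conj_iff {f g : DihedralGroup m →* G} :
    (∃ ρ : G, ∀ x, ρ * f x * ρ⁻¹ = g x) ↔
      ∃ ρ : G, ρ * f (r 1) * ρ⁻¹ = g (r 1) ∧ ρ * f (sr 0) * ρ⁻¹ = g (sr 0) := by
  refine exists_congr fun ρ => ⟨fun h => ⟨h _, h _⟩, fun h x => ?_⟩
  have : (MulAut.conj ρ).toMonoidHom.comp f = g := hom_ext_r_one_sr_zero h.1 h.2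
  exact DFunLike.congr_fun this x

end DihedralGroup

theorem ZMod.even_sub_of_not_even {d : ℕ} {x y : ZMod d} (hx : ¬Even x) (hy : ¬Even y) :
    Even (x - y) := by
  have hodd (z : ZMod d) (hz : ¬Even z) : Odd (z.cast : ℤ) := by
    refine Int.not_even_iff_odd.1 fun h => hz ?_
    simpa only [ZMod.intCast_zmod_cast] using h.intCast (α := ZMod d)
  rw [← ZMod.intCast_zmod_cast x, ← ZMod.intCast_zmod_cast y, ← Int.cast_sub]
  exact ((hodd x hx).sub_odd (hodd y hy)).intCast

section Counting

variable {A : Type*} [AddCommGroup A] [Fintype A] [DecidableEq A]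

theorem card_filter_add_self_eq_of_even {v : A} (hv : Even v) :
    #{a : A | a + a = v} = #{a : A | a + a = 0} := by
  obtain ⟨u, rfl⟩ := hv
  refine card_bij' (fun a _ => a - u) (fun a _ => a + u) ?_ ?_ (by simp) (by simp)
  · intro a ha
    simp only [mem_filter, mem_univ, true_and] at ha ⊢
    rw [sub_add_sub_comm, ha, sub_self]
  · intro a ha
    simp only [mem_filter, mem_univ, true_and] at ha ⊢
    rw [add_add_add_comm, ha, zero_add]

theorem card_filter_add_self_eq_zero_of_not_even {v : A} (hv : ¬Even v) :
    #{a : A | a + a = v} = 0 :=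
  card_eq_zero.2 <| filter_eq_empty_iff.2 fun a _ ha => hv ⟨a, ha.symm⟩

end Counting

namespace Equiv.Perm

variable {β : Type*} [Fintype β] [DecidableEq β]

theorem exists_support_subset_mem_iff {A B C : Finset β} (hA : A ⊆ C) (hB : B ⊆ C)
    (hcard : #A = #B) : ∃ w : Perm β, w.support ⊆ C ∧ ∀ x ∈ C, (x ∈ A ↔ w x ∈ B) := by
  let eA : {y : C // (y : β) ∈ A} ≃ A := Equiv.subtypeSubtypeEquivSubtype fun hx => hA hx
  let eB : {y : C // (y : β) ∈ B} ≃ B := Equiv.subtypeSubtypeEquivSubtype fun hx => hB hx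
  let e := (eA.trans (Fintype.equivOfCardEq (by simpa using hcard))).trans eB.symm
  refine ⟨ofSubtype e.extendSubtype, fun x hx => ?_, fun x hx => ?_⟩
  · by_contra hxC
    exact mem_support.1 hx (ofSubtype_apply_of_not_mem _ hxC)
  · rw [ofSubtype_apply_of_mem _ hx]
    by_cases hxA : x ∈ A
    · exact iff_of_true hxA (e.extendSubtype_mem ⟨x, hx⟩ hxA)
    · exact iff_of_false hxA (e.extendSubtype_not_mem ⟨x, hx⟩ hxA)

theorem exists_conj_eq_and_mem_iff {g g' : Perm β} (hg : g.cycleType = g'.cycleType)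
    {E E' : Finset β} (hE : ∀ j ∈ E, g j = j) (hE' : ∀ j ∈ E', g' j = j) (hcard : #E = #E') :
    ∃ h : Perm β, h * g * h⁻¹ = g' ∧ ∀ j, g j = j → (j ∈ E ↔ h j ∈ E') := by
  obtain ⟨h₁, hh₁⟩ := isConj_iff.1 (isConj_iff_cycleType_eq.2 hg)
  have hfix (j : β) (hj : g j = j) : h₁ j ∈ g'.supportᶜ := by
    rw [mem_compl, notMem_support, ← hh₁]
    simp [hj]
  obtain ⟨w, hwC, hw⟩ := exists_support_subset_mem_iff (A := E.map h₁.toEmbedding) (B := E')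
    (fun _ hx => by obtain ⟨j, hj, rfl⟩ := mem_map.1 hx; exact hfix j (hE j hj))
    (fun j hj => by simpa using hE' j hj) (by rw [card_map, hcard])
  have hw' : Commute w g' :=
    (disjoint_iff_disjoint_support.2 (disjoint_of_subset_left hwC disjoint_compl_left)).commute
  refine ⟨w * h₁, ?_, fun j hj => ?_⟩
  · calc w * h₁ * g * (w * h₁)⁻¹ = w * (h₁ * g * h₁⁻¹) * w⁻¹ := by group
      _ = g' := by rw [hh₁, hw'.eq, mul_inv_cancel_right]
  · rw [mul_apply, ← hw _ (hfix j hj)]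
    exact (mem_map' h₁.toEmbedding).symm

end Equiv.Perm

theorem exists_add_apply_eq_of_involutive {ι A : Type*} [LinearOrder ι] [AddCommMonoid A]
    {g : Perm ι} (hg : Function.Involutive g) {δ : ι → A} (hδ : ∀ j, δ (g j) = δ j)
    (heven : ∀ j, g j = j → Even (δ j)) : ∃ t : ι → A, ∀ j, t j + t (g j) = δ j := by
  classical
  choose! u hu using heven
  refine ⟨fun j => if g j = j then u j else if j < g j then δ j else 0, fun j => ?_⟩
  rcases lt_trichotomy j (g j) with h | h | h
  · simp [h.ne', h, hg j, h.ne, not_lt_of_gt h]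
  · simp [← h, hu j h.symm]
  · simp [h.ne, h, hg j, h.ne', not_lt_of_gt h, hδ j]

/- `Fin k × ZMod d` models `k` disjoint `d`-cycles, with `shift` their product: the centraliser of
`shift` consists of the `rotPerm h t`, and the permutations inverting it are the `reflPerm g c`. -/
namespace CycleModel

variable {k d : ℕ}

@[simps]
def rotPerm (h : Perm (Fin k)) (t : Fin k → ZMod d) : Perm (Fin k × ZMod d) where
  toFun p := (h p.1, p.2 + t p.1)
  invFun p := (h⁻¹ p.1, p.2 - t (h⁻¹ p.1))
  left_inv p := by simp
  right_inv p := by simp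

@[simps]
def reflPerm (g : Perm (Fin k)) (c : Fin k → ZMod d) : Perm (Fin k × ZMod d) where
  toFun p := (g p.1, c p.1 - p.2)
  invFun p := (g⁻¹ p.1, c (g⁻¹ p.1) - p.2)
  left_inv p := by simp
  right_inv p := by simp

def shift : Perm (Fin k × ZMod d) := rotPerm 1 fun _ => 1

theorem rotPerm_commute_shift (h : Perm (Fin k)) (t : Fin k → ZMod d) :
    Commute (rotPerm h t) shift := by
  ext p <;> simp [shift, add_right_comm]

theorem rotPerm_conj_reflPerm (h g : Perm (Fin k)) (t c : Fin k → ZMod d) :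
    rotPerm h t * reflPerm g c * (rotPerm h t)⁻¹ =
      reflPerm (h * g * h⁻¹) fun j => c (h⁻¹ j) + t (h⁻¹ j) + t (g (h⁻¹ j)) := by
  ext p <;> simp [Perm.inv_def]
  ring

theorem reflPerm_mul_self_eq_one_iff {g : Perm (Fin k)} {c : Fin k → ZMod d} :
    reflPerm g c * reflPerm g c = 1 ↔ Function.Involutive g ∧ ∀ j, c (g j) = c j := by
  refine ⟨fun h => ?_, fun ⟨hg, hc⟩ => Perm.ext fun p => by simp [hg p.1, hc p.1]⟩
  have hj (j : Fin k) := congrArg (fun F : Perm (Fin k × ZMod d) => F (j, 0)) h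
  simp only [Perm.mul_apply, reflPerm_apply, sub_zero, Perm.one_apply, Prod.mk.injEq] at hj
  exact ⟨fun j => (hj j).1, fun j => sub_eq_zero.1 (hj j).2⟩

theorem exists_apply_eq_of_apply_add_one [NeZero d] {F : Perm (Fin k × ZMod d)} {ε : ZMod d}
    (hε : ε * ε = 1) (hF : ∀ j a, F (j, a + 1) = ((F (j, a)).1, (F (j, a)).2 + ε)) :
    ∃ (g : Perm (Fin k)) (c : Fin k → ZMod d), ∀ j a, F (j, a) = (g j, c j + ε * a) := by
  have key (j : Fin k) (a : ZMod d) : F (j, a) = ((F (j, 0)).1, (F (j, 0)).2 + ε * a) := by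
    obtain ⟨v, rfl⟩ : ∃ v : ℕ, (v : ZMod d) = a := ⟨a.val, ZMod.natCast_zmod_val a⟩
    induction v with
    | zero => simp
    | succ v ih =>
      rw [Nat.cast_succ, hF, ih]
      simp only [Prod.mk.injEq, true_and]
      ring
  have hinj : Function.Injective fun j => (F (j, 0)).1 := by
    intro j j' hjj'
    have : F (j, ε * ((F (j', 0)).2 - (F (j, 0)).2)) = F (j', 0) := by
      rw [key, ← mul_assoc, hε, one_mul, add_sub_cancel]
      exact Prod.ext hjj' rfl
    exact congrArg Prod.fst (F.injective this)
  exact ⟨Equiv.ofBijective _ (Finite.injective_iff_bijective.1 hinj), _, key⟩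

theorem exists_eq_rotPerm_of_commute [NeZero d] {R : Perm (Fin k × ZMod d)}
    (hR : Commute R shift) : ∃ h t, R = rotPerm h t := by
  obtain ⟨h, t, hht⟩ := exists_apply_eq_of_apply_add_one (F := R) (mul_one 1) fun j a => by
    simpa [shift] using Perm.ext_iff.1 hR.eq (j, a)
  exact ⟨h, t, Perm.ext fun ⟨j, a⟩ => by simp [hht, add_comm]⟩

theorem exists_eq_reflPerm_of_conj_eq_inv [NeZero d] {Q : Perm (Fin k × ZMod d)}
    (hQ : Q * shift * Q⁻¹ = shift⁻¹) : ∃ g c, Q = reflPerm g c := by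
  rw [mul_inv_eq_iff_eq_mul] at hQ
  obtain ⟨g, c, hgc⟩ := exists_apply_eq_of_apply_add_one (F := Q) (ε := -1) (by ring) fun j a => by
    simpa [shift, Perm.inv_def, sub_eq_add_neg] using Perm.ext_iff.1 hQ (j, a)
  exact ⟨g, c, Perm.ext fun ⟨j, a⟩ => by simp [hgc, sub_eq_add_neg]⟩

theorem cycleType_eq_of_rotPerm_conj {h g g' : Perm (Fin k)} {t c c' : Fin k → ZMod d}
    (hconj : rotPerm h t * reflPerm g c * (rotPerm h t)⁻¹ = reflPerm g' c') :
    g.cycleType = g'.cycleType := by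
  rw [rotPerm_conj_reflPerm] at hconj
  have : h * g * h⁻¹ = g' := Perm.ext fun j =>
    congrArg (fun F : Perm (Fin k × ZMod d) => (F (j, 0)).1) hconj
  rw [← this, cycleType_conj]

open scoped Classical in
theorem card_compl_support_reflPerm [NeZero d] (g : Perm (Fin k)) (c : Fin k → ZMod d) :
    #(reflPerm g c).supportᶜ = #{j | g j = j ∧ Even (c j)} * #{a : ZMod d | a + a = 0} := by
  have hfix : (reflPerm g c).supportᶜ =
      ({p : Fin k × ZMod d | g p.1 = p.1 ∧ p.2 + p.2 = c p.1} : Finset _) := by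
    ext ⟨j, a⟩
    simp [sub_eq_iff_eq_add, eq_comm (a := c j)]
  have hfiber (j : Fin k) : #{a : ZMod d | g j = j ∧ a + a = c j} =
      if g j = j ∧ Even (c j) then #{a : ZMod d | a + a = 0} else 0 := by
    by_cases hj : g j = j
    · by_cases hc : Even (c j)
      · simpa [hj, hc] using card_filter_add_self_eq_of_even hc
      · simpa [hj, hc] using card_filter_add_self_eq_zero_of_not_even hc
    · simp [hj]
  rw [hfix, card_filter, Fintype.sum_prod_type]
  simp_rw [← card_filter, hfiber, sum_ite, sum_const_zero, add_zero, sum_const, smul_eq_mul]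

open scoped Classical in
theorem exists_rotPerm_conj_eq [NeZero d] {g g' : Perm (Fin k)} {c c' : Fin k → ZMod d}
    (hsq : reflPerm g c * reflPerm g c = 1) (hsq' : reflPerm g' c' * reflPerm g' c' = 1)
    (hcard : #(reflPerm g c).support = #(reflPerm g' c').support)
    (hcyc : g.cycleType = g'.cycleType) :
    ∃ h t, rotPerm h t * reflPerm g c * (rotPerm h t)⁻¹ = reflPerm g' c' := by
  obtain ⟨hg, hc⟩ := reflPerm_mul_self_eq_one_iff.1 hsq
  obtain ⟨-, hc'⟩ := reflPerm_mul_self_eq_one_iff.1 hsq'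
  have hE : #{j | g j = j ∧ Even (c j)} = #{j | g' j = j ∧ Even (c' j)} := by
    have h := card_compl_support_reflPerm g c
    rw [card_compl, hcard, ← card_compl, card_compl_support_reflPerm] at h
    exact Nat.eq_of_mul_eq_mul_right (card_pos.2 ⟨0, by simp⟩) h.symm
  -- `t j + t j = c' (h j) - c j` at a fixed point `j` of `g`, so `h` has to respect parities there
  obtain ⟨h, hconj, hmem⟩ := exists_conj_eq_and_mem_iff hcyc
    (fun j hj => (mem_filter.1 hj).2.1) (fun j hj => (mem_filter.1 hj).2.1) hE
  have hgh (j : Fin k) : g' (h j) = h (g j) := by simp [← hconj]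
  obtain ⟨t, ht⟩ := exists_add_apply_eq_of_involutive hg (δ := fun j => c' (h j) - c j)
    (fun j => by simp only [← hgh, hc, hc']) fun j hj => by
      have hj' : g' (h j) = h j := by rw [hgh, hj]
      have := hmem j hj
      simp only [mem_filter, mem_univ, true_and, hj, hj'] at this
      by_cases hev : Even (c j)
      · exact (this.1 hev).sub hev
      · exact ZMod.even_sub_of_not_even (fun h => hev (this.2 h)) hev
  refine ⟨h, t, ?_⟩
  rw [rotPerm_conj_reflPerm, hconj]
  congr 1
  funext j
  have hj : h (h⁻¹ j) = j := by simp
  have := ht (h⁻¹ j)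
  rw [hj] at this
  linear_combination this

end CycleModel

structure DisjointCycles (α : Type*) [Fintype α] [DecidableEq α] (k d : ℕ) where
  cycle : Fin k → Perm α
  isCycle : ∀ j, (cycle j).IsCycle
  card_support : ∀ j, #(cycle j).support = d
  disjoint : ∀ j j', j ≠ j' → (cycle j).Disjoint (cycle j')

namespace DisjointCycles

open CycleModel

variable {α : Type*} [Fintype α] [DecidableEq α] {k d : ℕ} (B : DisjointCycles α k d)

theorem neZero_of_pos (C : DisjointCycles α k d) (hk : 0 < k) : NeZero d :=
  ⟨by rw [← C.card_support ⟨0, hk⟩]; exact (C.isCycle _).ne_one ∘ card_support_eq_zero.1⟩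

def prod : Perm α := (List.ofFn B.cycle).prod

/-- `g` is the image of `π` under the map `H_σ → S_k` recording how `π` permutes the cycles. -/
def PermutesCycles (π : Perm α) (g : Perm (Fin k)) : Prop :=
  ∀ j, ∀ p ∈ (B.cycle j).support, π p ∈ (B.cycle (g j)).support

theorem pairwise_disjoint : (List.ofFn B.cycle).Pairwise Perm.Disjoint :=
  List.pairwise_ofFn.2 fun _ _ h => B.disjoint _ _ h.ne

theorem prod_apply_of_mem {j : Fin k} {x : α} (hx : x ∈ (B.cycle j).support) :
    B.prod x = B.cycle j x :=
  (eq_on_support_mem_disjoint (List.mem_ofFn.2 ⟨j, rfl⟩) B.pairwise_disjoint x hx).symm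

theorem support_cycle_subset (j : Fin k) : (B.cycle j).support ⊆ B.prod.support :=
  support_le_prod_of_mem (List.mem_ofFn.2 ⟨j, rfl⟩) B.pairwise_disjoint

theorem exists_mem_support_cycle {x : α} (hx : x ∈ B.prod.support) :
    ∃ j, x ∈ (B.cycle j).support := by
  obtain ⟨f, hf, hxf⟩ := exists_mem_support_of_mem_support_prod hx
  obtain ⟨j, rfl⟩ := List.mem_ofFn.1 hf
  exact ⟨j, hxf⟩

theorem cycleOf_eq {f : Perm α} (hf : Set.EqOn f B.prod B.prod.support) {j : Fin k} {x : α}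
    (hx : x ∈ (B.cycle j).support) : f.cycleOf x = B.cycle j := by
  refine (cycle_is_cycleOf hx (mem_cycleFactorsFinset_iff.2 ⟨B.isCycle j, fun y hy => ?_⟩)).symm
  rw [hf (B.support_cycle_subset j hy), B.prod_apply_of_mem hy]

theorem prod_eq_one_of_eq_zero (hk : k = 0) : B.prod = 1 := by
  subst hk
  simp [prod]

theorem permutesCycles_unique {π : Perm α} {g g' : Perm (Fin k)} (hg : B.PermutesCycles π g)
    (hg' : B.PermutesCycles π g') : g = g' := by
  ext1 j
  by_contra hne
  obtain ⟨x, hx⟩ := (B.isCycle j).nonempty_support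
  exact (B.disjoint _ _ hne).mem_imp (hg j x hx) (hg' j x hx)

theorem isCycleOn (j : Fin k) : (B.cycle j).IsCycleOn (B.cycle j).support := by
  simpa [coe_support_eq_set_support] using (B.isCycle j).isCycleOn

noncomputable def basePoint (j : Fin k) : α := (B.isCycle j).nonempty_support.choose

theorem basePoint_mem (j : Fin k) : B.basePoint j ∈ (B.cycle j).support :=
  (B.isCycle j).nonempty_support.choose_spec

noncomputable def point (p : Fin k × ZMod d) : α := (B.cycle p.1 ^ p.2.val) (B.basePoint p.1)

theorem point_mem (p : Fin k × ZMod d) : B.point p ∈ (B.cycle p.1).support :=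
  pow_apply_mem_support.2 (B.basePoint_mem p.1)

theorem point_eq_point_iff (j : Fin k) (m n : ℕ) :
    (B.cycle j ^ m) (B.basePoint j) = (B.cycle j ^ n) (B.basePoint j) ↔ (m : ZMod d) = n := by
  rw [(B.isCycleOn j).pow_apply_eq_pow_apply (B.basePoint_mem j),
    B.card_support, ZMod.natCast_eq_natCast_iff]

theorem exists_point_eq {j : Fin k} {x : α} (hx : x ∈ (B.cycle j).support) :
    ∃ a, B.point (j, a) = x := by
  obtain ⟨n, -, rfl⟩ := (B.isCycleOn j).exists_pow_eq (B.basePoint_mem j) hx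
  exact ⟨n, (B.point_eq_point_iff j _ _).2 (by simp)⟩

section Coordinates

variable [NeZero d]

theorem prod_point (j : Fin k) (a : ZMod d) : B.prod (B.point (j, a)) = B.point (j, a + 1) := by
  rw [B.prod_apply_of_mem (B.point_mem (j, a)), point, ← mul_apply, ← pow_succ', point,
    B.point_eq_point_iff]
  simp

theorem point_injective : Function.Injective B.point := by
  rintro ⟨j, a⟩ ⟨j', a'⟩ h
  obtain rfl : j = j' := by
    by_contra hne
    exact (B.disjoint _ _ hne).mem_imp (B.point_mem (j, a)) (h ▸ B.point_mem (j', a'))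
  simpa using (B.point_eq_point_iff j _ _).1 h

noncomputable def coords : Fin k × ZMod d ≃ B.prod.support :=
  Equiv.ofBijective (fun p => ⟨B.point p, B.support_cycle_subset _ (B.point_mem p)⟩)
    ⟨fun p q h => B.point_injective (congrArg Subtype.val h), fun ⟨x, hx⟩ => by
      obtain ⟨j, hj⟩ := B.exists_mem_support_cycle hx
      obtain ⟨a, rfl⟩ := B.exists_point_eq hj
      exact ⟨(j, a), rfl⟩⟩

theorem point_coords_symm (x : B.prod.support) : B.point (B.coords.symm x) = x :=
  congrArg Subtype.val (B.coords.apply_symm_apply x)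

noncomputable def ofModel : Perm (Fin k × ZMod d) →* Perm α := extendDomainHom B.coords

theorem ofModel_apply_point (X : Perm (Fin k × ZMod d)) (p : Fin k × ZMod d) :
    B.ofModel X (B.point p) = B.point (X p) :=
  extendDomain_apply_image X B.coords p

theorem ofModel_injective : Function.Injective B.ofModel := extendDomainHom_injective B.coords

theorem card_support_ofModel (X : Perm (Fin k × ZMod d)) :
    #(B.ofModel X).support = #X.support :=
  card_support_extend_domain B.coords

theorem support_ofModel_subset (X : Perm (Fin k × ZMod d)) :
    (B.ofModel X).support ⊆ B.prod.support := fun x hx => by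
  by_contra h
  exact mem_support.1 hx (extendDomain_apply_not_subtype X B.coords h)

theorem ofModel_shift : B.ofModel shift = B.prod := by
  ext x
  by_cases hx : x ∈ B.prod.support
  · obtain ⟨j, hj⟩ := B.exists_mem_support_cycle hx
    obtain ⟨a, rfl⟩ := B.exists_point_eq hj
    rw [ofModel_apply_point, prod_point]
    simp [shift]
  · rw [notMem_support.1 hx]
    exact extendDomain_apply_not_subtype _ B.coords hx

theorem exists_ofModel_eq {f : Perm α} (hf : f.support ⊆ B.prod.support) :
    ∃ X, B.ofModel X = f := by
  refine ⟨B.coords.symm.permCongr (f.subtypePermOfFintype (mapsTo_of_support_subset hf)), ?_⟩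
  ext x
  by_cases hx : x ∈ B.prod.support
  · obtain ⟨p, hp⟩ := B.coords.surjective ⟨x, hx⟩
    have : x = B.point p := congrArg Subtype.val hp.symm
    subst this
    simp only [ofModel_apply_point, permCongr_apply, symm_symm, point_coords_symm]
    rfl
  · rw [notMem_support.1 fun h => hx (hf h)]
    exact extendDomain_apply_not_subtype _ B.coords hx

theorem permutesCycles_ofModel_reflPerm (g : Perm (Fin k)) (c : Fin k → ZMod d) :
    B.PermutesCycles (B.ofModel (reflPerm g c)) g := fun j x hx => by
  obtain ⟨a, rfl⟩ := B.exists_point_eq hx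
  rw [ofModel_apply_point]
  exact B.point_mem _

end Coordinates


theorem exists_permutesCycles_cycleType_eq {π π' ρ : Perm α}
    (hπ : π.support ⊆ B.prod.support) (hπ' : π'.support ⊆ B.prod.support)
    (hρ : ρ.support ⊆ B.prod.support) (hrel : π * B.prod * π⁻¹ = B.prod⁻¹)
    (hrel' : π' * B.prod * π'⁻¹ = B.prod⁻¹) (hcomm : Commute ρ B.prod)
    (hconj : ρ * π * ρ⁻¹ = π') :
    ∃ g g' : Perm (Fin k), B.PermutesCycles π g ∧ B.PermutesCycles π' g' ∧
      g.cycleType = g'.cycleType := by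
  rcases Nat.eq_zero_or_pos k with rfl | hk
  · exact ⟨1, 1, fun j => j.elim0, fun j => j.elim0, rfl⟩
  have := B.neZero_of_pos hk
  obtain ⟨Q, rfl⟩ := B.exists_ofModel_eq hπ
  obtain ⟨Q', rfl⟩ := B.exists_ofModel_eq hπ'
  obtain ⟨R, rfl⟩ := B.exists_ofModel_eq hρ
  rw [← B.ofModel_shift] at hrel hrel' hcomm
  obtain ⟨g, c, rfl⟩ :=
    exists_eq_reflPerm_of_conj_eq_inv (B.ofModel_injective (by simpa using hrel))
  obtain ⟨g', c', rfl⟩ :=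
    exists_eq_reflPerm_of_conj_eq_inv (B.ofModel_injective (by simpa using hrel'))
  obtain ⟨h, t, rfl⟩ := exists_eq_rotPerm_of_commute (B.ofModel_injective (by simpa using hcomm.eq))
  exact ⟨g, g', B.permutesCycles_ofModel_reflPerm g c, B.permutesCycles_ofModel_reflPerm g' c',
    cycleType_eq_of_rotPerm_conj (B.ofModel_injective (by simpa using hconj))⟩

theorem exists_conj_eq_of_cycleType_eq {π π' : Perm α}
    (hπ : π.support ⊆ B.prod.support) (hπ' : π'.support ⊆ B.prod.support)
    (hrel : π * B.prod * π⁻¹ = B.prod⁻¹) (hrel' : π' * B.prod * π'⁻¹ = B.prod⁻¹)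
    (hsq : π * π = 1) (hsq' : π' * π' = 1) (hconj : IsConj π π')
    {g g' : Perm (Fin k)} (hg : B.PermutesCycles π g) (hg' : B.PermutesCycles π' g')
    (hcyc : g.cycleType = g'.cycleType) :
    ∃ ρ : Perm α, ρ.support ⊆ B.prod.support ∧ Commute ρ B.prod ∧ ρ * π * ρ⁻¹ = π' := by
  rcases Nat.eq_zero_or_pos k with rfl | hk
  · have h1 {f : Perm α} (hf : f.support ⊆ B.prod.support) : f = 1 := by
      rwa [B.prod_eq_one_of_eq_zero rfl, support_one, subset_empty, support_eq_empty_iff] at hf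
    exact ⟨1, by simp, Commute.one_left _, by simp [h1 hπ, h1 hπ']⟩
  have := B.neZero_of_pos hk
  have hcard : #π.support = #π'.support := by
    obtain ⟨c, rfl⟩ := isConj_iff.1 hconj
    exact card_support_conj.symm
  obtain ⟨Q, rfl⟩ := B.exists_ofModel_eq hπ
  obtain ⟨Q', rfl⟩ := B.exists_ofModel_eq hπ'
  rw [← B.ofModel_shift] at hrel hrel'
  obtain ⟨g₀, c, rfl⟩ :=
    exists_eq_reflPerm_of_conj_eq_inv (B.ofModel_injective (by simpa using hrel))
  obtain ⟨g₀', c', rfl⟩ :=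
    exists_eq_reflPerm_of_conj_eq_inv (B.ofModel_injective (by simpa using hrel'))
  obtain rfl := B.permutesCycles_unique hg (B.permutesCycles_ofModel_reflPerm g₀ c)
  obtain rfl := B.permutesCycles_unique hg' (B.permutesCycles_ofModel_reflPerm g₀' c')
  obtain ⟨h, t, hht⟩ := exists_rotPerm_conj_eq (B.ofModel_injective (by simpa using hsq))
    (B.ofModel_injective (by simpa using hsq')) (by simpa only [card_support_ofModel] using hcard)
    hcyc
  refine ⟨B.ofModel (rotPerm h t), B.support_ofModel_subset _, ?_, ?_⟩
  · rw [← B.ofModel_shift]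
    exact (rotPerm_commute_shift h t).map B.ofModel
  · rw [← hht, map_mul, map_mul, map_inv]

end DisjointCycles

namespace Equiv.Perm

variable {α : Type*} [Fintype α] [DecidableEq α] {l : ℕ} {σs : Fin l → Perm α}

theorem ofFn_prod_apply_eq_self {A : Fin l → Perm α} {x : α} (h : ∀ i, A i x = x) :
    (List.ofFn A).prod x = x := by
  by_contra hx
  obtain ⟨f, hf, hxf⟩ := exists_mem_support_of_mem_support_prod (mem_support.2 hx)
  obtain ⟨i, rfl⟩ := List.mem_ofFn.1 hf
  exact mem_support.1 hxf (h i)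

theorem eqOn_ofFn_prod (hσs : ∀ i i', i ≠ i' → (σs i).Disjoint (σs i')) {A : Fin l → Perm α}
    (hA : ∀ i, (A i).support ⊆ (σs i).support) (i : Fin l) :
    Set.EqOn (List.ofFn A).prod (A i) (σs i).support := by
  intro x hx
  by_cases hxA : x ∈ (A i).support
  · refine (eq_on_support_mem_disjoint (List.mem_ofFn.2 ⟨i, rfl⟩) ?_ x hxA).symm
    exact List.pairwise_ofFn.2 fun j j' h => (hσs j j' h.ne).mono (hA j) (hA j')
  · rw [notMem_support.1 hxA]
    refine ofFn_prod_apply_eq_self fun j => notMem_support.1 fun hj => ?_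
    obtain rfl | hji := eq_or_ne j i
    · exact hxA hj
    · exact (hσs j i hji).mem_imp (hA j hj) hx

theorem support_subset_support_ofFn_prod (hσs : ∀ i i', i ≠ i' → (σs i).Disjoint (σs i'))
    (i : Fin l) : (σs i).support ⊆ (List.ofFn σs).prod.support :=
  support_le_prod_of_mem (List.mem_ofFn.2 ⟨i, rfl⟩)
    (List.pairwise_ofFn.2 fun j j' h => hσs j j' h.ne)

theorem support_ofFn_prod_subset (hσs : ∀ i i', i ≠ i' → (σs i).Disjoint (σs i'))
    {A : Fin l → Perm α} (hA : ∀ i, (A i).support ⊆ (σs i).support) :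
    (List.ofFn A).prod.support ⊆ (List.ofFn σs).prod.support := fun x hx => by
  obtain ⟨f, hf, hxf⟩ := exists_mem_support_of_mem_support_prod hx
  obtain ⟨i, rfl⟩ := List.mem_ofFn.1 hf
  exact support_subset_support_ofFn_prod hσs i (hA i hxf)

theorem eq_of_eqOn_ofFn_prod {F G : Perm α}
    (h₀ : Set.EqOn F G ((List.ofFn σs).prod.supportᶜ : Finset α))
    (h : ∀ i, Set.EqOn F G (σs i).support) :
    F = G := by
  ext x
  by_cases hx : x ∈ (List.ofFn σs).prod.support
  · obtain ⟨f, hf, hxf⟩ := exists_mem_support_of_mem_support_prod hx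
    obtain ⟨i, rfl⟩ := List.mem_ofFn.1 hf
    exact h i hxf
  · exact h₀ (mem_compl.2 hx)

theorem eqOn_mul_ofFn_prod (hσs : ∀ i i', i ≠ i' → (σs i).Disjoint (σs i')) {μ : Perm α}
    {A : Fin l → Perm α} (hμ : μ.support ⊆ (List.ofFn σs).prod.supportᶜ)
    (hA : ∀ i, (A i).support ⊆ (σs i).support) (i : Fin l) :
    Set.EqOn ⇑(μ * (List.ofFn A).prod) (A i) (σs i).support := by
  have hμ₁ : Set.EqOn μ ⇑(1 : Perm α) (σs i).support := eqOn_one_of_disjoint <|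
    disjoint_of_subset_left hμ <| disjoint_of_subset_right
      (support_subset_support_ofFn_prod hσs i) disjoint_compl_left
  simpa using hμ₁.perm_mul (eqOn_ofFn_prod hσs hA i) (mapsTo_of_support_subset (hA i))

theorem eqOn_mul_ofFn_prod_compl (hσs : ∀ i i', i ≠ i' → (σs i).Disjoint (σs i'))
    (μ : Perm α) {A : Fin l → Perm α} (hA : ∀ i, (A i).support ⊆ (σs i).support) :
    Set.EqOn ⇑(μ * (List.ofFn A).prod) μ ((List.ofFn σs).prod.supportᶜ : Finset α) := by
  have hA₁ : Set.EqOn (List.ofFn A).prod ⇑(1 : Perm α)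
      ((List.ofFn σs).prod.supportᶜ : Finset α) :=
    eqOn_one_of_disjoint (disjoint_of_subset_left (support_ofFn_prod_subset hσs hA)
      disjoint_compl_right)
  simpa using (Set.eqOn_refl μ _).perm_mul hA₁ (by simpa using Set.mapsTo_id _)

theorem mul_self_eq_one_of_mul_ofFn_prod (hσs : ∀ i i', i ≠ i' → (σs i).Disjoint (σs i'))
    {μ : Perm α} {π : Fin l → Perm α} (hμ : μ.support ⊆ (List.ofFn σs).prod.supportᶜ)
    (hπ : ∀ i, (π i).support ⊆ (σs i).support)
    (h : μ * (List.ofFn π).prod * (μ * (List.ofFn π).prod) = 1) (i : Fin l) :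
    π i * π i = 1 := by
  have hs := eqOn_mul_ofFn_prod hσs hμ hπ i
  refine eq_of_eqOn ((support_mul_le _ _).trans (sup_le (hπ i) (hπ i))) (by simp)
    fun x hx => ?_
  rw [← hs.perm_mul hs (mapsTo_of_support_subset (hπ i)) hx, h]

theorem conj_eq_inv_of_mul_ofFn_prod (hσs : ∀ i i', i ≠ i' → (σs i).Disjoint (σs i'))
    {μ : Perm α} {π : Fin l → Perm α} (hμ : μ.support ⊆ (List.ofFn σs).prod.supportᶜ)
    (hπ : ∀ i, (π i).support ⊆ (σs i).support)
    (h : μ * (List.ofFn π).prod * (List.ofFn σs).prod * (μ * (List.ofFn π).prod)⁻¹ =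
      (List.ofFn σs).prod⁻¹) (i : Fin l) :
    π i * σs i * (π i)⁻¹ = (σs i)⁻¹ := by
  have hσ := eqOn_ofFn_prod hσs (fun _ => subset_rfl) i
  exact conj_eq_of_eqOn (eqOn_mul_ofFn_prod hσs hμ hπ i) (hπ i) hσ subset_rfl
    (hσ.perm_inv (mapsTo_inv_of_support_subset subset_rfl)) (support_inv _).subset h

theorem apply_mem_support_iff_of_commute {k d : Fin l → ℕ}
    (B : ∀ i, DisjointCycles α (k i) (d i))
    (hB : ∀ i i', i ≠ i' → (B i).prod.Disjoint (B i').prod) (hd : Function.Injective d)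
    {ρ : Perm α} (hρ : Commute ρ (List.ofFn fun i => (B i).prod).prod) (i : Fin l) (x : α) :
    ρ x ∈ (B i).prod.support ↔ x ∈ (B i).prod.support := by
  have hlen (i : Fin l) {x : α} (hx : x ∈ (B i).prod.support) :
      #((List.ofFn fun i => (B i).prod).prod.cycleOf x).support = d i := by
    obtain ⟨j, hj⟩ := (B i).exists_mem_support_cycle hx
    rw [(B i).cycleOf_eq (eqOn_ofFn_prod hB (fun _ => subset_rfl) i) hj, (B i).card_support]
  have key (ρ : Perm α) (hρ : Commute ρ (List.ofFn fun i => (B i).prod).prod) {x : α}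
      (hx : x ∈ (B i).prod.support) : ρ x ∈ (B i).prod.support := by
    obtain ⟨f, hf, hxf⟩ := exists_mem_support_of_mem_support_prod <|
      (hρ.apply_mem_support_iff x).2 (support_subset_support_ofFn_prod hB i hx)
    obtain ⟨i', rfl⟩ := List.mem_ofFn.1 hf
    obtain rfl : i' = i :=
      hd (by rw [← hlen i' hxf, card_support_cycleOf_apply_of_commute hρ, hlen i hx])
    exact hxf
  exact ⟨fun h => by simpa using key ρ⁻¹ hρ.inv_left h, key ρ hρ⟩

theorem mul_self_eq_one_and_conj_eq_inv_of_dihedral {m : ℕ}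
    (hσs : ∀ i i', i ≠ i' → (σs i).Disjoint (σs i')) (f : DihedralGroup m →* Perm α)
    {μ : Perm α} {π : Fin l → Perm α} (hr : f (DihedralGroup.r 1) = (List.ofFn σs).prod)
    (hs : f (DihedralGroup.sr 0) = μ * (List.ofFn π).prod)
    (hμ : μ.support ⊆ (List.ofFn σs).prod.supportᶜ) (hπ : ∀ i, (π i).support ⊆ (σs i).support)
    (i : Fin l) : π i * π i = 1 ∧ π i * σs i * (π i)⁻¹ = (σs i)⁻¹ := by
  refine ⟨mul_self_eq_one_of_mul_ofFn_prod hσs hμ hπ ?_ i,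
    conj_eq_inv_of_mul_ofFn_prod hσs hμ hπ ?_ i⟩
  · rw [← hs]
    exact DihedralGroup.map_sr_zero_mul_self f
  · rw [← hs, ← hr]
    exact DihedralGroup.map_sr_zero_conj_r_one f

theorem exists_blockwise_conj_of_conj (hσs : ∀ i i', i ≠ i' → (σs i).Disjoint (σs i'))
    {μ μ' : Perm α} {π π' : Fin l → Perm α} (hμ : μ.support ⊆ (List.ofFn σs).prod.supportᶜ)
    (hμ' : μ'.support ⊆ (List.ofFn σs).prod.supportᶜ) (hπ : ∀ i, (π i).support ⊆ (σs i).support)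
    (hπ' : ∀ i, (π' i).support ⊆ (σs i).support) {ρ : Perm α}
    (hρσ : Commute ρ (List.ofFn σs).prod) (hρ : ∀ i x, ρ x ∈ (σs i).support ↔ x ∈ (σs i).support)
    (hs : ρ * (μ * (List.ofFn π).prod) * ρ⁻¹ = μ' * (List.ofFn π').prod) :
    IsConj μ μ' ∧ ∀ i, ∃ ρi : Perm α,
      ρi.support ⊆ (σs i).support ∧ Commute ρi (σs i) ∧ ρi * π i * ρi⁻¹ = π' i := by
  refine ⟨?_, fun i => ?_⟩
  · obtain ⟨ρ₀, hρ₀, hρρ₀⟩ := exists_support_subset_eqOn (T := (List.ofFn σs).prod.supportᶜ)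
      fun x => by simpa using (hρσ.apply_mem_support_iff x).not
    exact isConj_iff.2 ⟨ρ₀, conj_eq_of_eqOn hρρ₀ hρ₀ (eqOn_mul_ofFn_prod_compl hσs μ hπ) hμ
      (eqOn_mul_ofFn_prod_compl hσs μ' hπ') hμ' hs⟩
  · obtain ⟨ρi, hρi, hρρi⟩ := exists_support_subset_eqOn (hρ i)
    have hσi := eqOn_ofFn_prod hσs (fun _ => subset_rfl) i
    refine ⟨ρi, hρi, ?_, conj_eq_of_eqOn hρρi hρi (eqOn_mul_ofFn_prod hσs hμ hπ i) (hπ i)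
      (eqOn_mul_ofFn_prod hσs hμ' hπ' i) (hπ' i) hs⟩
    exact mul_inv_eq_iff_eq_mul.1
      (conj_eq_of_eqOn hρρi hρi hσi subset_rfl hσi subset_rfl hρσ.mul_inv_cancel)

theorem exists_conj_of_blockwise_conj (hσs : ∀ i i', i ≠ i' → (σs i).Disjoint (σs i'))
    {μ μ' : Perm α} {π π' : Fin l → Perm α} (hμ : μ.support ⊆ (List.ofFn σs).prod.supportᶜ)
    (hμ' : μ'.support ⊆ (List.ofFn σs).prod.supportᶜ) (hπ : ∀ i, (π i).support ⊆ (σs i).support)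
    (hπ' : ∀ i, (π' i).support ⊆ (σs i).support) (hμμ' : IsConj μ μ')
    (hππ' : ∀ i, ∃ ρi : Perm α,
      ρi.support ⊆ (σs i).support ∧ Commute ρi (σs i) ∧ ρi * π i * ρi⁻¹ = π' i) :
    ∃ ρ : Perm α, ρ * (List.ofFn σs).prod * ρ⁻¹ = (List.ofFn σs).prod ∧
      ρ * (μ * (List.ofFn π).prod) * ρ⁻¹ = μ' * (List.ofFn π').prod := by
  obtain ⟨ρ₀, hρ₀, hμρ₀⟩ := exists_conj_support_subset hμ hμ' hμμ'
  choose ρs hρs hcomm hconj using hππ'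
  have hρ₀' := eqOn_mul_ofFn_prod_compl hσs ρ₀ hρs
  have hρs' := eqOn_mul_ofFn_prod hσs hρ₀ hρs
  have hσ₀ : Set.EqOn (List.ofFn σs).prod ⇑(1 : Perm α) ((List.ofFn σs).prod.supportᶜ : Finset α) :=
    eqOn_one_of_disjoint disjoint_compl_right
  have hσs' := eqOn_ofFn_prod hσs (fun _ => subset_rfl)
  refine ⟨ρ₀ * (List.ofFn ρs).prod, eq_of_eqOn_ofFn_prod (σs := σs) ?_ fun i => ?_,
    eq_of_eqOn_ofFn_prod (σs := σs) ?_ fun i => ?_⟩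
  · exact eqOn_conj_of_eqOn hρ₀' hρ₀ hσ₀ (by simp) hσ₀ (by simp)
  · exact eqOn_conj_of_eqOn (hρs' i) (hρs i) (hσs' i) subset_rfl (hσs' i) (hcomm i).mul_inv_cancel
  · exact eqOn_conj_of_eqOn hρ₀' hρ₀ (eqOn_mul_ofFn_prod_compl hσs μ hπ) hμ
      (eqOn_mul_ofFn_prod_compl hσs μ' hπ') hμρ₀
  · exact eqOn_conj_of_eqOn (hρs' i) (hρs i) (eqOn_mul_ofFn_prod hσs hμ hπ i) (hπ i)
      (eqOn_mul_ofFn_prod hσs hμ' hπ' i) (hconj i)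

end Equiv.Perm

theorem dihedral_homomorphism_conjugacy_general
    {m : ℕ} {n l : ℕ} (φ ψ : DihedralGroup m →* Equiv.Perm (Fin n))
    (σ : Equiv.Perm (Fin n)) (σs : Fin l → Equiv.Perm (Fin n))
    (k d : Fin l → ℕ) (hd : Function.Injective d)
    (τ : (i : Fin l) → Fin (k i) → Equiv.Perm (Fin n))
    (hcyc : ∀ i j, (τ i j).IsCycle)
    (hlen : ∀ i j, (τ i j).support.card = d i)
    (hdisjτ : ∀ i, ∀ j j' : Fin (k i), j ≠ j' → Equiv.Perm.Disjoint (τ i j) (τ i j'))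
    (hσs : ∀ i, σs i = (List.ofFn (τ i)).prod)
    (hdisjσ : ∀ i i', i ≠ i' → Equiv.Perm.Disjoint (σs i) (σs i'))
    (hσ : σ = (List.ofFn σs).prod)
    (hr : φ (DihedralGroup.r 1) = σ) (hr' : ψ (DihedralGroup.r 1) = σ)
    -- decompositions of `φ(s)` and `ψ(s)`
    (μ μ' : Equiv.Perm (Fin n)) (π π' : Fin l → Equiv.Perm (Fin n))
    (hμ : μ.support ⊆ σ.supportᶜ) (hμ' : μ'.support ⊆ σ.supportᶜ)
    (hπmem : ∀ i, π i ∈ Hgrp (σs i)) (hπ'mem : ∀ i, π' i ∈ Hgrp (σs i))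
    (hφs : φ (DihedralGroup.sr 0) = μ * (List.ofFn π).prod)
    (hψs : ψ (DihedralGroup.sr 0) = μ' * (List.ofFn π').prod) :
    (∃ ρ : Equiv.Perm (Fin n), ∀ g : DihedralGroup m, ρ * φ g * ρ⁻¹ = ψ g) ↔
      (IsConj μ μ' ∧
       ∀ i, IsConj (π i) (π' i) ∧
         ∃ g g' : Equiv.Perm (Fin (k i)),
           (∀ j : Fin (k i), ∀ p ∈ (τ i j).support, π i p ∈ (τ i (g j)).support) ∧
           (∀ j : Fin (k i), ∀ p ∈ (τ i j).support, π' i p ∈ (τ i (g' j)).support) ∧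
           g.cycleType = g'.cycleType) := by
  let B (i : Fin l) : DisjointCycles (Fin n) (k i) (d i) := ⟨τ i, hcyc i, hlen i, hdisjτ i⟩
  obtain rfl : σs = fun i => (B i).prod := funext hσs
  subst hσ
  have hπ (i : Fin l) := (hπmem i).1
  have hπ' (i : Fin l) := (hπ'mem i).1
  obtain ⟨hsq, hrel⟩ :=
    forall_and.1 (mul_self_eq_one_and_conj_eq_inv_of_dihedral hdisjσ φ hr hφs hμ hπ)
  obtain ⟨hsq', hrel'⟩ :=
    forall_and.1 (mul_self_eq_one_and_conj_eq_inv_of_dihedral hdisjσ ψ hr' hψs hμ' hπ')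
  rw [DihedralGroup.exists_conj_iff, hr, hr', hφs, hψs]
  constructor
  · rintro ⟨ρ, hρσ, hρs⟩
    have hcomm : Commute ρ _ := mul_inv_eq_iff_eq_mul.1 hρσ
    obtain ⟨hμμ', hblocks⟩ := exists_blockwise_conj_of_conj hdisjσ hμ hμ' hπ hπ' hcomm
      (apply_mem_support_iff_of_commute B hdisjσ hd hcomm) hρs
    refine ⟨hμμ', fun i => ?_⟩
    obtain ⟨ρi, hρi, hcommi, hconj⟩ := hblocks i
    exact ⟨isConj_iff.2 ⟨ρi, hconj⟩, (B i).exists_permutesCycles_cycleType_eq (hπ i) (hπ' i) hρi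
      (hrel i) (hrel' i) hcommi hconj⟩
  · rintro ⟨hμμ', hblocks⟩
    refine exists_conj_of_blockwise_conj hdisjσ hμ hμ' hπ hπ' hμμ' fun i => ?_
    obtain ⟨hconj, g, g', hg, hg', hgg'⟩ := hblocks i
    exact (B i).exists_conj_eq_of_cycleType_eq (hπ i) (hπ' i) (hrel i) (hrel' i) (hsq i) (hsq' i)
      hconj hg hg' hgg'

/-- Main dihedral theorem.
`φ, ψ : D_{2m} → S_n` are generator-conjugate with respect to the generators `r, s` of
the dihedral group and satisfy `φ(r) = ψ(r) = σ = σ₁⋯σ_l` (each `σᵢ` a product of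
`kᵢ` pairwise disjoint `dᵢ`-cycles `τ_{1,i},…,τ_{kᵢ,i}`, the `dᵢ` pairwise distinct).
Write `φ(s) = μπ₁⋯π_l`, `ψ(s) = μ'π₁'⋯π_l'` with `μ, μ' ∈ S_{Fix(σ)}` and
`πᵢ, πᵢ' ∈ H_{σᵢ}`.  Then `φ` and `ψ` are conjugate iff (i) `μ, μ'` are conjugate in
`S_n`, and (ii) for every `i`, `πᵢ, πᵢ'` are conjugate in `S_n` and their images under
the induced homomorphism `H_{σᵢ} → H_{σᵢ}/K_{H_{σᵢ}} ≅ S_{kᵢ}` (encoded by how the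
supports of the cycles are permuted) have the same cycle type. -/
theorem dihedral_homomorphism_conjugacy
    {m : ℕ} {n l : ℕ} (φ ψ : DihedralGroup m →* Equiv.Perm (Fin n))
    (σ : Equiv.Perm (Fin n)) (σs : Fin l → Equiv.Perm (Fin n))
    (k d : Fin l → ℕ) (hd : Function.Injective d)
    (τ : (i : Fin l) → Fin (k i) → Equiv.Perm (Fin n))
    (hcyc : ∀ i j, (τ i j).IsCycle)
    (hlen : ∀ i j, (τ i j).support.card = d i)
    (hdisjτ : ∀ i, ∀ j j' : Fin (k i), j ≠ j' → Equiv.Perm.Disjoint (τ i j) (τ i j'))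
    (hσs : ∀ i, σs i = (List.ofFn (τ i)).prod)
    (hdisjσ : ∀ i i', i ≠ i' → Equiv.Perm.Disjoint (σs i) (σs i'))
    (hσ : σ = (List.ofFn σs).prod)
    -- generator-conjugacy with respect to `r, s`
    (hgc : IsConj (φ (DihedralGroup.r 1)) (ψ (DihedralGroup.r 1)) ∧
           IsConj (φ (DihedralGroup.sr 0)) (ψ (DihedralGroup.sr 0)))
    (hr : φ (DihedralGroup.r 1) = σ) (hr' : ψ (DihedralGroup.r 1) = σ)
    -- decompositions of `φ(s)` and `ψ(s)`
    (μ μ' : Equiv.Perm (Fin n)) (π π' : Fin l → Equiv.Perm (Fin n))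
    (hμ : μ.support ⊆ σ.supportᶜ) (hμ' : μ'.support ⊆ σ.supportᶜ)
    (hπmem : ∀ i, π i ∈ Hgrp (σs i)) (hπ'mem : ∀ i, π' i ∈ Hgrp (σs i))
    (hφs : φ (DihedralGroup.sr 0) = μ * (List.ofFn π).prod)
    (hψs : ψ (DihedralGroup.sr 0) = μ' * (List.ofFn π').prod) :
    (∃ ρ : Equiv.Perm (Fin n), ∀ g : DihedralGroup m, ρ * φ g * ρ⁻¹ = ψ g) ↔
      (IsConj μ μ' ∧
       ∀ i, IsConj (π i) (π' i) ∧
         ∃ g g' : Equiv.Perm (Fin (k i)),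
           (∀ j : Fin (k i), ∀ p ∈ (τ i j).support, π i p ∈ (τ i (g j)).support) ∧
           (∀ j : Fin (k i), ∀ p ∈ (τ i j).support, π' i p ∈ (τ i (g' j)).support) ∧
           g.cycleType = g'.cycleType) :=
  dihedral_homomorphism_conjugacy_general φ ψ σ σs k d hd τ hcyc hlen hdisjτ hσs hdisjσ hσ hr hr' μ
    μ' π π' hμ hμ' hπmem hπ'mem hφs hψs
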